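/- arXiv:0802.0883 — 2 statements merged into one kernel-verified Lean document; each statement's English description precedes it below -/
import Mathlib

section
/- Let G = A *_C be an HNN extension of a group A over a subgroup C with stable letter t, and suppose G is residually free. Then t conjugates the intersection of the centre of A with C into the centre of A, i.e. (Z(A) ∩ C)^t ⊆ Z(A). -/
/-!
In a free group, the centralizer of a nontrivial element is a free group (Nielsen–Schreier) with
nontrivial centre, hence of rank one and abelian: free groups are commutative transitive. Put
`d = φ c = t c t⁻¹` and take `a ∈ A`. Under any `f` to a free group, `f c` commutes with both
`f d` and `f a`; so `f d` and `f a` commute, trivially if `f c = 1` (then `f d = 1`) and by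
commutative transitivity otherwise. Residual freeness gives `[d, a] = 1` in the HNN extension,
and `A` embeds in it (Britton's lemma), so `d ∈ Z(A)`.
-/

namespace FreeGroup

variable {α : Type*}

theorem head_toWord_fst_eq_of_commute [DecidableEq α] {g : FreeGroup α} {c : α} {p : α × Bool}
    (hp : g.toWord.head? = some p) (h : Commute (of c) g) : p.1 = c := by
  by_contra hpc
  -- As `p.1 ≠ c`, nothing cancels in `of c * g`, so its word has length `|g| + 1`. Then nothing
  -- cancels in `g * of c` either, and the same word would start with both `(c, true)` and `p`.
  obtain ⟨L, hL⟩ : ∃ L, g.toWord = p :: L := by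
    cases hg : g.toWord with
    | nil => simp [hg] at hp
    | cons q L => simp_all
  have hleft : (of c * g).toWord = (c, true) :: g.toWord := by
    rw [toWord_mul, toWord_of, List.singleton_append, reduce.cons, reduce_toWord, hL]
    simp [Ne.symm hpc]
  have hright : (g * of c).toWord = g.toWord ++ [(c, true)] :=
    (toWord_mul_sublist g (of c)).eq_of_length (by rw [← h.eq, hleft, toWord_of]; simp)
  have hwords : (c, true) :: g.toWord = g.toWord ++ [(c, true)] := by
    rw [← hleft, ← hright, h.eq]
  rw [hL, List.cons_append, List.cons.injEq] at hwords
  exact hpc (by rw [← hwords.1])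

theorem eq_one_of_commute_of_commute {g : FreeGroup α} {a b : α} (hab : a ≠ b)
    (ha : Commute (of a) g) (hb : Commute (of b) g) : g = 1 := by
  classical
  by_contra hg
  obtain ⟨p, hp⟩ := Option.ne_none_iff_exists'.mp (by simpa [toWord_eq_nil_iff] using hg :
    g.toWord.head? ≠ none)
  exact hab ((head_toWord_fst_eq_of_commute hp ha).symm.trans
    (head_toWord_fst_eq_of_commute hp hb))

theorem commute_of_subsingleton [Subsingleton α] (u v : FreeGroup α) : Commute u v := by
  cases isEmpty_or_nonempty α
  · exact Subsingleton.elim u v ▸ Commute.refl u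
  · have : Unique α := uniqueOfSubsingleton (Classical.arbitrary α)
    let := IsCyclic.commGroup (α := FreeGroup α)
    exact Commute.all u v

theorem commute_of_mem_center {x : FreeGroup α} (hx : x ∈ Subgroup.center (FreeGroup α))
    (hx1 : x ≠ 1) (u v : FreeGroup α) : Commute u v :=
  have : Subsingleton α := ⟨fun _ _ => by_contra fun hab =>
    hx1 (eq_one_of_commute_of_commute hab (hx.comm _).symm (hx.comm _).symm)⟩
  commute_of_subsingleton u v

end FreeGroup

theorem IsFreeGroup.commute_of_mem_center {G : Type*} [Group G] [IsFreeGroup G] {x : G}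
    (hx : x ∈ Subgroup.center G) (hx1 : x ≠ 1) (u v : G) : Commute u v := by
  let e := IsFreeGroup.toFreeGroup G
  have hex : e x ∈ Subgroup.center _ := Subgroup.mem_center_iff.mpr fun w => by
    rw [← e.apply_symm_apply w, ← map_mul, ← map_mul, (hx.comm _).eq]
  simpa using (FreeGroup.commute_of_mem_center hex (by simpa using hx1) (e u) (e v)).map e.symm

theorem IsFreeGroup.commute_of_commute_of_ne_one {G : Type*} [Group G] [IsFreeGroup G]
    {x y z : G} (hx1 : x ≠ 1) (hxy : Commute x y) (hxz : Commute x z) : Commute y z := by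
  -- `H` is free by the Nielsen–Schreier theorem `subgroupIsFreeOfIsFree`.
  let H := Subgroup.centralizer {x}
  have mem {w : G} (hw : Commute x w) : w ∈ H :=
    Subgroup.mem_centralizer_singleton_iff.mpr hw.eq.symm
  have hxH : (⟨x, mem (.refl x)⟩ : H) ∈ Subgroup.center H :=
    Subgroup.mem_center_iff.mpr fun w => Subtype.ext (Subgroup.mem_centralizer_singleton_iff.mp w.2)
  exact congrArg Subtype.val
    (IsFreeGroup.commute_of_mem_center hxH (by simpa using hx1) ⟨y, mem hxy⟩ ⟨z, mem hxz⟩)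

def IsResiduallyFree (G : Type*) [Group G] : Prop :=
  ∀ g : G, g ≠ 1 → ∃ (β : Type) (f : G →* FreeGroup β), f g ≠ 1

namespace IsResiduallyFree

variable {G : Type*} [Group G]

theorem commute_of_forall_commute_map (hG : IsResiduallyFree G) {y z : G}
    (h : ∀ (β : Type) (f : G →* FreeGroup β), Commute (f y) (f z)) : Commute y z := by
  by_contra hne
  obtain ⟨β, f, hf⟩ := hG _ (mt mul_inv_eq_one.mp hne)
  exact hf (by rw [map_mul_inv, map_mul, map_mul, (h β f).eq, mul_inv_cancel])

theorem commute_conj_of_commute (hG : IsResiduallyFree G) {x t z : G}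
    (hx : Commute x (t * x * t⁻¹)) (hxz : Commute x z) : Commute (t * x * t⁻¹) z := by
  refine hG.commute_of_forall_commute_map fun β f => ?_
  by_cases hfx : f x = 1
  · simp [hfx]
  · exact IsFreeGroup.commute_of_commute_of_ne_one hfx (hx.map f) (hxz.map f)

end IsResiduallyFree

/-- Let `G = A*_C` be an HNN extension of `A` over a subgroup `C` (with associated
isomorphism `φ : C ≃* C'`) with stable letter `t`.  If the HNN extension is
residually free, then `t` conjugates `Z(A) ∩ C` into `Z(A)`. -/
theorem hnn_extension_center_conjugate (A : Type*) [Group A]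
    (C C' : Subgroup A) (φ : C ≃* C')
    (hRF : ∀ g : HNNExtension A C C' φ, g ≠ 1 →
      ∃ (β : Type) (f : HNNExtension A C C' φ →* FreeGroup β), f g ≠ 1) :
    ∀ c : A, c ∈ Subgroup.center A → c ∈ C →
      HNNExtension.t * HNNExtension.of c * HNNExtension.t⁻¹ ∈
        (Subgroup.center A).map (HNNExtension.of : A →* HNNExtension A C C' φ) := by
  intro c hc hcC
  have hconj := HNNExtension.equiv_eq_conj (φ := φ) ⟨c, hcC⟩
  refine ⟨φ ⟨c, hcC⟩, Subgroup.mem_center_iff.mpr fun a => ?_, hconj⟩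
  have hcomm (a : A) : Commute (HNNExtension.of (φ := φ) c) (HNNExtension.of a) :=
    (hc.comm a).map HNNExtension.of
  have := IsResiduallyFree.commute_conj_of_commute hRF (hconj ▸ hcomm _) (hcomm a)
  apply HNNExtension.of_injective (φ := φ)
  simpa [← hconj] using this.symm.eq
end

section
/- Every cyclic subgroup of a free group is a retract of a finite-index subgroup (Marshall Hall's theorem for cyclic subgroups). -/
/-!
Conjugating, we may assume that `x` is given by a nonempty cyclically reduced word `w` of
length `n`. Writing `w` around a cycle with vertex set `ℤ/n`, each generator labels a partial
injection of `ℤ/n` (cyclic reducedness is exactly what makes it injective); extending these to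
permutations gives an action of the free group on `ℤ/n` in which `w` runs once around the cycle.
Recording in addition, in the wreath product `ℤ ≀ Sym(ℤ/n)`, how often a path crosses the edge of
the cycle at `0`, the stabiliser of `0` (a subgroup of finite index containing `x`) maps
homomorphically to `ℤ` with `w ↦ 1`; composed with `k ↦ w ^ k` this is the retraction.
-/

open FreeGroup Multiplicative

def Subgroup.IsVirtualRetract {G : Type*} [Group G] (H : Subgroup G) : Prop :=
  ∃ K : Subgroup G, K.index ≠ 0 ∧ H ≤ K ∧
    ∃ r : K →* G, (∀ g : K, r g ∈ H) ∧ ∀ g : K, (g : G) ∈ H → r g = (g : G)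

namespace Subgroup
variable {G : Type*} [Group G]

theorem isVirtualRetract_bot : (⊥ : Subgroup G).IsVirtualRetract :=
  ⟨⊤, by simp, bot_le, 1, fun _ => one_mem _, fun g hg => by simp [mem_bot.mp hg]⟩

theorem isVirtualRetract_zpowers_of_map_eq_ofAdd_one {K : Subgroup G} (hK : K.index ≠ 0)
    {x : G} (hx : x ∈ K) (χ : K →* Multiplicative ℤ) (hχ : χ ⟨x, hx⟩ = ofAdd 1) :
    (zpowers x).IsVirtualRetract := by
  refine ⟨K, hK, zpowers_le.mpr hx, (zpowersHom G x).comp χ, fun g => ⟨(χ g).toAdd, rfl⟩, ?_⟩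
  rintro g ⟨k, hk⟩
  obtain rfl : g = ⟨x, hx⟩ ^ k := Subtype.ext (by simpa using hk.symm)
  simp [hχ]

end Subgroup

abbrev PermWreath (M X : Type*) [Group M] := (X → M) ⋊[mulAutArrow] Equiv.Perm X

namespace PermWreath
variable {M X : Type*} [Group M]

-- `(f, σ)` is read as the permutation `σ` carrying the label `f (σ x)` on its arrow `x ↦ σ x`;
-- acting on `X × M` then multiplies up the labels along a path.
instance : MulAction (PermWreath M X) (X × M) where
  smul p z := (p.right z.1, p.left (p.right z.1) * z.2)
  one_smul z := Prod.ext rfl (one_mul z.2)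
  mul_smul p q z := Prod.ext rfl (by
    show p.left (p.right (q.right z.1)) * q.left (p.right⁻¹ (p.right (q.right z.1))) * z.2 =
      p.left (p.right (q.right z.1)) * (q.left (q.right z.1) * z.2)
    rw [Equiv.Perm.inv_def, Equiv.symm_apply_apply, mul_assoc])

theorem smul_def (p : PermWreath M X) (z : X × M) :
    p • z = (p.right z.1, p.left (p.right z.1) * z.2) := rfl

theorem exists_smul_eq {E : Type*} [Finite E] {f h : E → X} (hf : f.Injective) (hh : h.Injective)
    (c : E → M) : ∃ p : PermWreath M X, ∀ e (m : M), p • (f e, m) = (h e, c e * m) := by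
  obtain ⟨σ, hσ⟩ := Equiv.Perm.exists_extending_pair f h hf hh
  exact ⟨(⟨Function.extend h c 1, σ⟩ : PermWreath M X), fun e m => by
    simp [smul_def, hσ, hh.extend_apply]⟩

def holonomy (x₀ : X) :
    (MulAction.stabilizer (Equiv.Perm X) x₀).comap
      (SemidirectProduct.rightHom : PermWreath M X →* _) →* M where
  toFun p := p.1.left x₀
  map_one' := rfl
  map_mul' p q := by
    have hp : p.1.right⁻¹ x₀ = x₀ := (p⁻¹).2
    show p.1.left x₀ * q.1.left (p.1.right⁻¹ x₀) = _
    rw [hp]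

end PermWreath

theorem Subgroup.isVirtualRetract_zpowers_of_smul_eq {G X : Type*} [Group G] [Finite X]
    (Φ : G →* PermWreath (Multiplicative ℤ) X) {x : G} {x₀ : X}
    (h : Φ x • (x₀, (1 : Multiplicative ℤ)) = (x₀, ofAdd 1)) : (zpowers x).IsVirtualRetract := by
  set S := (MulAction.stabilizer (Equiv.Perm X) x₀).comap
      (SemidirectProduct.rightHom : PermWreath (Multiplicative ℤ) X →* _)
  obtain ⟨hx, hhol⟩ := Prod.ext_iff.mp h
  simp only [PermWreath.smul_def, mul_one] at hx hhol
  rw [hx] at hhol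
  replace hx : x ∈ S.comap Φ := hx
  refine isVirtualRetract_zpowers_of_map_eq_ofAdd_one (K := S.comap Φ) ?_ hx
    ((PermWreath.holonomy x₀).comp (Φ.subgroupComap S)) ?_
  · rw [Subgroup.comap_comap, Subgroup.index_comap]
    exact Subgroup.isFiniteRelIndex_of_finiteIndex.relIndex_ne_zero
  · exact hhol

theorem List.prod_smul_eq_of_getElem_smul {G Y : Type*} [Monoid G] [MulAction G Y] (L : List G)
    (y : ℕ → Y) (h : ∀ i (hi : i < L.length), L[i] • y (i + 1) = y i) :
    L.prod • y L.length = y 0 := by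
  induction L generalizing y with
  | nil => simp
  | cons g L ih =>
    rw [List.prod_cons, mul_smul, List.length_cons,
      ih (fun i => y (i + 1)) fun i hi => h (i + 1) (by simpa using hi)]
    exact h 0 (by simp)

namespace FreeGroup
variable {α : Type*}

theorem exists_conj_mk_isCyclicallyReduced (x : FreeGroup α) :
    ∃ u L, IsCyclicallyReduced L ∧ u * mk L * u⁻¹ = x := by
  classical
  refine ⟨mk (reduceCyclically.conjugator x.toWord), reduceCyclically x.toWord,
    reduceCyclically.isCyclicallyReduced isReduced_toWord, ?_⟩
  rw [inv_mk, mul_mk, mul_mk, reduceCyclically.conj_conjugator_reduceCyclically, mk_toWord]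

section CyclicWord
variable {L : List (α × Bool)} [NeZero L.length]

def cyclicLetter (L : List (α × Bool)) [NeZero L.length] (s : ZMod L.length) : α × Bool :=
  L[s.val]'(ZMod.val_lt s)

theorem cyclicLetter_natCast {i : ℕ} (hi : i < L.length) : cyclicLetter L i = L[i] := by
  simp [cyclicLetter, ZMod.val_cast_of_lt hi]

theorem IsCyclicallyReduced.cyclicLetter_add_one (hL : IsCyclicallyReduced L) (s : ZMod L.length)
    (h : (cyclicLetter L s).1 = (cyclicLetter L (s + 1)).1) :
    (cyclicLetter L s).2 = (cyclicLetter L (s + 1)).2 := by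
  obtain ⟨i, hi, rfl⟩ : ∃ i < L.length, (i : ZMod L.length) = s :=
    ⟨s.val, ZMod.val_lt s, ZMod.natCast_zmod_val s⟩
  rcases (Nat.succ_le_of_lt hi).lt_or_eq with hlt | heq
  · rw [← Nat.cast_succ, cyclicLetter_natCast hi, cyclicLetter_natCast hlt] at h ⊢
    exact hL.isReduced.getElem i hlt h
  · have h0 : (i : ZMod L.length) + 1 = ((0 : ℕ) : ZMod L.length) := by
      rw [← Nat.cast_succ, heq, ZMod.natCast_self, Nat.cast_zero]
    rw [h0, cyclicLetter_natCast hi, cyclicLetter_natCast (NeZero.pos _)] at h ⊢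
    exact hL.2 _ (by simp [List.getLast?_eq_getElem?, ← heq]) _
      (by simp [List.head?_eq_getElem?]) h

/-- The letter at position `s` is an edge joining `s + 1` and `s`; its generator moves
`edgeSource L s` to `edgeTarget L s`. -/
def edgeSource (L : List (α × Bool)) [NeZero L.length] (s : ZMod L.length) : ZMod L.length :=
  if (cyclicLetter L s).2 then s + 1 else s

def edgeTarget (L : List (α × Bool)) [NeZero L.length] (s : ZMod L.length) : ZMod L.length :=
  if (cyclicLetter L s).2 then s else s + 1

theorem IsCyclicallyReduced.edgeSource_injective (hL : IsCyclicallyReduced L) (g : α) :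
    Function.Injective fun s : {s // (cyclicLetter L s).1 = g} => edgeSource L s := by
  rintro ⟨s, hs⟩ ⟨t, ht⟩ hst
  have hs' := hL.cyclicLetter_add_one s
  have ht' := hL.cyclicLetter_add_one t
  simp only [edgeSource] at hst
  ext1
  split_ifs at hst <;> grind

theorem IsCyclicallyReduced.edgeTarget_injective (hL : IsCyclicallyReduced L) (g : α) :
    Function.Injective fun s : {s // (cyclicLetter L s).1 = g} => edgeTarget L s := by
  rintro ⟨s, hs⟩ ⟨t, ht⟩ hst
  have hs' := hL.cyclicLetter_add_one s
  have ht' := hL.cyclicLetter_add_one t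
  simp only [edgeTarget] at hst
  ext1
  split_ifs at hst <;> grind

theorem IsCyclicallyReduced.exists_letter_smul_eq {M : Type*} [Group M]
    (hL : IsCyclicallyReduced L) (μ : ZMod L.length → M) :
    ∃ φ : α → PermWreath M (ZMod L.length), ∀ s m,
      cond (cyclicLetter L s).2 (φ (cyclicLetter L s).1) (φ (cyclicLetter L s).1)⁻¹ • (s + 1, m) =
        (s, μ s * m) := by
  choose φ hφ using fun g => PermWreath.exists_smul_eq (hL.edgeSource_injective g)
    (hL.edgeTarget_injective g) fun e => if (cyclicLetter L e).2 then μ e else (μ e)⁻¹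
  refine ⟨φ, fun s m => ?_⟩
  have hs := hφ _ ⟨s, rfl⟩
  cases h : (cyclicLetter L s).2
  · simp only [edgeSource, edgeTarget, h, Bool.false_eq_true, if_false] at hs
    rw [cond_false, inv_smul_eq_iff, hs]
    simp
  · simpa [edgeSource, edgeTarget, h] using hs m

theorem IsCyclicallyReduced.exists_smul_mk_eq (hL : IsCyclicallyReduced L) :
    ∃ Φ : FreeGroup α →* PermWreath (Multiplicative ℤ) (ZMod L.length),
      Φ (mk L) • ((0 : ZMod L.length), (1 : Multiplicative ℤ)) = (0, ofAdd 1) := by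
  obtain ⟨φ, hφ⟩ := hL.exists_letter_smul_eq (Pi.mulSingle 0 (ofAdd (1 : ℤ)))
  -- `y i` is where the suffix of `L` from position `i` takes `(0, 1)`: only the letter at
  -- position `0` crosses the marked edge
  let y (i : ℕ) : ZMod L.length × Multiplicative ℤ := (i, if i = 0 then ofAdd 1 else 1)
  have key := List.prod_smul_eq_of_getElem_smul (L.map fun x => cond x.2 (φ x.1) (φ x.1)⁻¹) y
    fun i hi => by
      rw [List.length_map] at hi
      have hi0 : (i : ZMod L.length) = 0 ↔ i = 0 := by
        rw [← ZMod.val_eq_zero, ZMod.val_natCast_of_lt hi]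
      have := hφ i 1
      rw [cyclicLetter_natCast hi] at this
      simp [y, this, Pi.mulSingle_apply, hi0]
  exact ⟨lift φ, by simpa [lift_mk, y, NeZero.ne] using key⟩

end CyclicWord
end FreeGroup

/-- Marshall Hall's theorem for cyclic subgroups: every cyclic subgroup of a free
group is a retract of a finite-index subgroup. -/
theorem free_group_virtual_retract_cyclic (α : Type*) (x : FreeGroup α) :
    ∃ F' : Subgroup (FreeGroup α), F'.index ≠ 0 ∧ Subgroup.zpowers x ≤ F' ∧
      ∃ r : F' →* FreeGroup α, (∀ g : F', r g ∈ Subgroup.zpowers x) ∧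
        ∀ g : F', (g : FreeGroup α) ∈ Subgroup.zpowers x → r g = (g : FreeGroup α) := by
  change (Subgroup.zpowers x).IsVirtualRetract
  obtain ⟨u, L, hL, rfl⟩ := exists_conj_mk_isCyclicallyReduced x
  rcases eq_or_ne L [] with rfl | hne
  · simpa [← one_eq_mk] using Subgroup.isVirtualRetract_bot (G := FreeGroup α)
  have : NeZero L.length := ⟨by simpa using hne⟩
  obtain ⟨Φ, hΦ⟩ := hL.exists_smul_mk_eq
  exact Subgroup.isVirtualRetract_zpowers_of_smul_eq (Φ.comp (MulAut.conj u⁻¹).toMonoidHom)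
    (by simpa [mul_assoc] using hΦ)
end
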